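/- arXiv:1902.03881 — 2 statements merged into one kernel-verified Lean document; each statement's English description precedes it below -/
import Mathlib

section
/- Let A = [[α, β], [γ, δ]] be a normalized matrix in GL₂⁻(ℤ) with A ≠ H and A ≠ -H. Then β and δ are both nonzero and β/δ > 0 (equivalently, βδ > 0). -/
def IsNormalized (α β γ δ : ℤ) : Prop :=
  α * δ - β * γ = -1 ∧ β ≠ 0 ∧
  0 ≤ (β / |β|) * α ∧ (β / |β|) * α < |β| ∧
  0 ≤ (β / |β|) * δ ∧ (β / |β|) * δ < |β|

/-!
Write `ε = sign β`. If `δ = 0`, the determinant condition reads `βγ = 1`, so `β = γ = ε`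
is a unit, and `0 ≤ εα < |β| = 1` forces `α = 0`: the matrix is `εH`. Otherwise the
normalization `0 ≤ εδ` makes `εδ > 0`, and `βδ = |β| · εδ > 0`.
-/

namespace IsNormalized

variable {α β γ δ : ℤ}

theorem eq_H_or_eq_neg_H_of_delta_eq_zero (h : IsNormalized α β γ δ) (hδ : δ = 0) :
    (α = 0 ∧ β = 1 ∧ γ = 1 ∧ δ = 0) ∨ (α = 0 ∧ β = -1 ∧ γ = -1 ∧ δ = 0) := by
  obtain ⟨hdet, -, hα, hα', -, -⟩ := h
  subst hδ
  have hβγ : β * γ = 1 := by linarith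
  rw [← Int.sign_eq_ediv_abs'] at hα hα'
  rcases Int.eq_one_or_neg_one_of_mul_eq_one hβγ with rfl | rfl
  · simp only [Int.sign_one, one_mul, abs_one] at hα hα'
    left; omega
  · simp only [Int.sign_neg, Int.sign_one, neg_one_mul, abs_neg, abs_one] at hα hα'
    right; omega

theorem mul_pos_of_delta_ne_zero (h : IsNormalized α β γ δ) (hδ : δ ≠ 0) : 0 < β * δ := by
  obtain ⟨-, hβ, -, -, hεδ, -⟩ := h
  rw [← Int.sign_eq_ediv_abs'] at hεδ
  have hεδ_pos : 0 < β.sign * δ :=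
    hεδ.lt_of_ne' (mul_ne_zero (mt Int.sign_eq_zero_iff_zero.1 hβ) hδ)
  calc 0 < |β| * (β.sign * δ) := mul_pos (abs_pos.2 hβ) hεδ_pos
    _ = β * δ := by rw [mul_left_comm, ← mul_assoc, Int.sign_mul_abs]

end IsNormalized

/-- For a normalized matrix `A = [[α,β],[γ,δ]]` with `A ≠ H` and `A ≠ -H`
(`H = [[0,1],[1,0]]`), both `β` and `δ` are nonzero and `β/δ > 0`
(equivalently `βδ > 0`). -/
theorem stmt_2 (α β γ δ : ℤ) (h : IsNormalized α β γ δ)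
    (hH : ¬(α = 0 ∧ β = 1 ∧ γ = 1 ∧ δ = 0))
    (hH' : ¬(α = 0 ∧ β = -1 ∧ γ = -1 ∧ δ = 0)) :
    β ≠ 0 ∧ δ ≠ 0 ∧ (β : ℚ) / (δ : ℚ) > 0 ∧ β * δ > 0 := by
  have hδ : δ ≠ 0 := fun hδ ↦
    (h.eq_H_or_eq_neg_H_of_delta_eq_zero hδ).elim hH hH'
  have hβδ : 0 < β * δ := h.mul_pos_of_delta_ne_zero hδ
  have hβδ_rat : (0 : ℚ) < β * δ := by exact_mod_cast hβδ
  exact ⟨h.2.1, hδ, div_pos_iff.2 (mul_pos_iff.1 hβδ_rat), hβδ⟩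
end

section
/- Let A = [[α, β], [γ, δ]] be a 2×2 integer matrix with determinant -1 and β ≠ 0. Set k = -⌊α/β⌋ and h = -⌊δ/β⌋, and let U = [[1,0],[1,1]]. Then the matrix A' = Uʰ A Uᵏ = [[α + kβ, β], [γ + hα + kδ + khβ, δ + hβ]] is normalized. -/
/-!
Subtracting `⌊α/β⌋ β` from `α` leaves `β` times the fractional part of `α/β`; multiplied by
`sign β` this is `|β|` times a number in `[0, 1)`, hence lies in `[0, |β|)`. The same holds for
`δ`, and the unimodular row and column operations `Uʰ · Uᵏ` preserve the determinant.
-/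

namespace Int

theorem cast_sign_mul_sub_floor_div_mul (a b : ℤ) :
    ((b.sign * (a - ⌊(a : ℚ) / b⌋ * b) : ℤ) : ℚ) = |(b : ℚ)| * Int.fract ((a : ℚ) / b) := by
  rcases eq_or_ne b 0 with rfl | hb
  · simp
  have hb' : (b : ℚ) ≠ 0 := by exact_mod_cast hb
  rw [Int.fract, ← Int.cast_abs, ← Int.sign_mul_self_eq_abs]
  push_cast
  field_simp

theorem sign_mul_sub_floor_div_mul_nonneg (a b : ℤ) :
    0 ≤ b.sign * (a - ⌊(a : ℚ) / b⌋ * b) := by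
  have h : (0 : ℚ) ≤ |(b : ℚ)| * Int.fract ((a : ℚ) / b) :=
    mul_nonneg (abs_nonneg _) (Int.fract_nonneg _)
  rw [← cast_sign_mul_sub_floor_div_mul] at h
  exact_mod_cast h

theorem sign_mul_sub_floor_div_mul_lt_abs {b : ℤ} (hb : b ≠ 0) (a : ℤ) :
    b.sign * (a - ⌊(a : ℚ) / b⌋ * b) < |b| := by
  have hb' : (0 : ℚ) < |(b : ℚ)| := abs_pos.mpr (by exact_mod_cast hb)
  have h : |(b : ℚ)| * Int.fract ((a : ℚ) / b) < |(b : ℚ)| :=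
    mul_lt_of_lt_one_right hb' (Int.fract_lt_one _)
  rw [← cast_sign_mul_sub_floor_div_mul, ← Int.cast_abs] at h
  exact_mod_cast h

end Int

/-- Given `A = [[α,β],[γ,δ]]` with determinant `-1` and `β ≠ 0`, setting
`k = -⌊α/β⌋` and `h = -⌊δ/β⌋`, the matrix
`A' = Uʰ A Uᵏ = [[α + kβ, β], [γ + hα + kδ + khβ, δ + hβ]]` is normalized. -/
theorem stmt_4 (α β γ δ : ℤ) (hdet : α * δ - β * γ = -1) (hβ : β ≠ 0)
    (k h : ℤ) (hk : k = -⌊(α : ℚ) / (β : ℚ)⌋) (hh : h = -⌊(δ : ℚ) / (β : ℚ)⌋) :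
    IsNormalized (α + k * β) β (γ + h * α + k * δ + k * h * β) (δ + h * β) := by
  have hα : α + k * β = α - ⌊(α : ℚ) / β⌋ * β := by rw [hk]; ring
  have hδ : δ + h * β = δ - ⌊(δ : ℚ) / β⌋ * β := by rw [hh]; ring
  refine ⟨by linear_combination hdet, hβ, ?_⟩
  rw [← Int.sign_eq_ediv_abs', hα, hδ]
  exact ⟨Int.sign_mul_sub_floor_div_mul_nonneg α β, Int.sign_mul_sub_floor_div_mul_lt_abs hβ α,
    Int.sign_mul_sub_floor_div_mul_nonneg δ β, Int.sign_mul_sub_floor_div_mul_lt_abs hβ δ⟩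
end
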